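/- arXiv:1201.3800 — 2 statements merged into one kernel-verified Lean document; each statement's English description precedes it below -/
import Mathlib

section
/- Let n ≥ 2 and let 0 < 2r ≤ R. Define ρ : ℝⁿ → ℝ by ρ(x) = 1/(|x - a| · log(R/r)) if r < |x - a| < R and ρ(x) = 0 otherwise. Then for any locally rectifiable path γ joining the closed ball B̄(a,r) to ℝⁿ \ B(a,R), we have ∫_γ ρ ds ≥ 1; that is, ρ is admissible for the path family Γ(B̄(a,r), ℝⁿ \ B(a,R)). -/
open MeasureTheory Metric Set

/-- the standard logarithmic function is admissible for the family of
paths joining `closedBall a r` to the complement of `ball a R`. -/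
theorem stmt0 (n : ℕ) (hn : 2 ≤ n) (a : EuclideanSpace ℝ (Fin n)) (r R : ℝ)
    (hr : 0 < r) (hR : 2 * r ≤ R)
    (ρ : EuclideanSpace ℝ (Fin n) → ℝ)
    (hρ : ρ = fun x => if r < ‖x - a‖ ∧ ‖x - a‖ < R
      then (‖x - a‖ * Real.log (R / r))⁻¹ else 0)
    (γ : ℝ → EuclideanSpace ℝ (Fin n)) (hγ : ContDiff ℝ 1 γ)
    (h0 : γ 0 ∈ closedBall a r) (h1 : γ 1 ∉ ball a R) :
    1 ≤ ∫ t in (0:ℝ)..1, ρ (γ t) * ‖deriv γ t‖ := by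
  classical
  set L := Real.log (R / r) with hL
  have hrR : r < R := lt_of_lt_of_le (by linarith) hR
  have hRpos : 0 < R := hr.trans hrR
  have hLpos : 0 < L := Real.log_pos (by rw [lt_div_iff₀ hr]; linarith)
  set u : ℝ → ℝ := fun t => ‖γ t - a‖ with hu
  have hγc : Continuous γ := hγ.continuous
  have huc : Continuous u := (hγc.sub continuous_const).norm
  have hu0 : u 0 ≤ r := by
    have := mem_closedBall.mp h0; rwa [dist_eq_norm] at this
  have hu1 : R ≤ u 1 := by
    have := mem_ball.not.mp h1; push_neg at this
    rwa [dist_eq_norm] at this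
  have hdc : Continuous (deriv γ) := hγ.continuous_deriv le_rfl
  set φ : ℝ → ℝ := fun t => ρ (γ t) * ‖deriv γ t‖ with hφ
  have hφ_nonneg : ∀ t, 0 ≤ φ t := by
    intro t
    apply mul_nonneg _ (norm_nonneg _)
    rw [hρ]; dsimp only
    split_ifs with h
    · have : 0 < ‖γ t - a‖ := lt_trans hr h.1
      positivity
    · exact le_refl 0
  -- φ is integrable on [0,1]
  have hφ_int : IntegrableOn φ (Icc (0:ℝ) 1) := by
    have hA : MeasurableSet {t : ℝ | r < u t ∧ u t < R} := by
      have : {t : ℝ | r < u t ∧ u t < R} = u ⁻¹' (Ioo r R) := rfl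
      rw [this]
      exact (isOpen_Ioo.preimage huc).measurableSet
    have hmeas : Measurable φ := by
      have h1m : Measurable (fun t => ρ (γ t)) := by
        rw [hρ]
        exact Measurable.ite hA ((huc.measurable.mul measurable_const).inv)
          measurable_const
      exact h1m.mul hdc.norm.measurable
    apply Integrable.mono' ((continuous_const.mul hdc.norm : Continuous fun t => (r*L)⁻¹ * ‖deriv γ t‖).integrableOn_Icc)
      hmeas.aestronglyMeasurable
    filter_upwards with t
    rw [Real.norm_of_nonneg (hφ_nonneg t)]
    simp only [hφ, hρ]
    split_ifs with h
    · apply mul_le_mul_of_nonneg_right _ (norm_nonneg _)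
      apply inv_anti₀ (by positivity)
      exact mul_le_mul_of_nonneg_right h.1.le hLpos.le
    · simp only [zero_mul]
      exact mul_nonneg (inv_nonneg.mpr (mul_pos hr hLpos).le) (norm_nonneg _)
  -- define t1 and t0
  set S : Set ℝ := {t ∈ Icc (0:ℝ) 1 | R ≤ u t} with hS
  have hS_closed : IsClosed S := by
    have : S = Icc 0 1 ∩ u ⁻¹' (Ici R) := by ext t; simp [hS, and_comm]
    rw [this]
    exact isClosed_Icc.inter (isClosed_Ici.preimage huc)
  have hS_ne : S.Nonempty := ⟨1, ⟨by norm_num, hu1⟩⟩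
  have hS_bdd : BddBelow S := ⟨0, fun t ht => ht.1.1⟩
  set t1 := sInf S with ht1
  have ht1_mem : t1 ∈ S := hS_closed.csInf_mem hS_ne hS_bdd
  have ht1_mem' : t1 ∈ Icc (0:ℝ) 1 := ht1_mem.1
  have hut1 : R ≤ u t1 := ht1_mem.2
  set T : Set ℝ := {t ∈ Icc (0:ℝ) t1 | u t ≤ r} with hT
  have hT_closed : IsClosed T := by
    have : T = Icc 0 t1 ∩ u ⁻¹' (Iic r) := by ext t; simp [hT, and_comm]
    rw [this]
    exact isClosed_Icc.inter (isClosed_Iic.preimage huc)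
  have hT_ne : T.Nonempty := ⟨0, ⟨⟨le_refl 0, ht1_mem'.1⟩, hu0⟩⟩
  have hT_bdd : BddAbove T := ⟨t1, fun t ht => ht.1.2⟩
  set t0 := sSup T with ht0
  have ht0_mem : t0 ∈ T := hT_closed.csSup_mem hT_ne hT_bdd
  have hut0 : u t0 ≤ r := ht0_mem.2
  have ht0_nonneg : 0 ≤ t0 := ht0_mem.1.1
  have ht01 : t0 < t1 := by
    rcases lt_or_eq_of_le ht0_mem.1.2 with h | h
    · exact h
    · exfalso; rw [h] at hut0; linarith
  -- on (t0, t1), r < u t < R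
  have hmid : ∀ t ∈ Ioo t0 t1, r < u t ∧ u t < R := by
    intro t ht
    constructor
    · by_contra h
      push_neg at h
      have : t ∈ T := ⟨⟨ht0_nonneg.trans ht.1.le, ht.2.le⟩, h⟩
      exact absurd (le_csSup hT_bdd this) (not_le.mpr ht.1)
    · by_contra h
      push_neg at h
      have : t ∈ S := ⟨⟨ht0_nonneg.trans ht.1.le, ht.2.le.trans ht1_mem'.2⟩, h⟩
      exact absurd (csInf_le hS_bdd this) (not_le.mpr ht.2)
  -- u t0 = r by right continuity
  have hut0' : u t0 = r := by
    refine le_antisymm hut0 ?_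
    have htend : Filter.Tendsto u (nhdsWithin t0 (Ioi t0)) (nhds (u t0)) :=
      (huc.continuousAt).continuousWithinAt
    refine ge_of_tendsto htend ?_
    filter_upwards [Ioo_mem_nhdsGT_of_mem ⟨le_refl t0, ht01⟩] with t ht
    exact (hmid t ht).1.le
  -- the comparison function
  set g : ℝ → ℝ := fun t => Real.log ((u t) ^ 2) / (2 * L) with hg
  have hune : ∀ t ∈ Icc t0 t1, u t ≠ 0 := by
    intro t ht
    rcases eq_or_lt_of_le ht.1 with h | h
    · rw [← h, hut0']; exact ne_of_gt hr
    · rcases eq_or_lt_of_le ht.2 with h2 | h2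
      · rw [h2]; exact ne_of_gt (lt_of_lt_of_le hRpos hut1)
      · exact ne_of_gt (lt_trans hr (hmid t ⟨h, h2⟩).1)
  have hg_cont : ContinuousOn g (Icc t0 t1) := by
    apply ContinuousOn.div_const
    apply ContinuousOn.log ((huc.continuousOn).pow 2)
    intro t ht
    exact pow_ne_zero 2 (hune t ht)
  -- derivative of g
  set g' : ℝ → ℝ := fun t =>
    (inner ℝ (γ t - a) (deriv γ t) : ℝ) / ((u t) ^ 2 * L) with hg'
  have hg_deriv : ∀ t ∈ Ioo t0 t1, HasDerivWithinAt g (g' t) (Ioi t) t := by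
    intro t ht
    have hupos : 0 < u t := lt_trans hr (hmid t ht).1
    have hv : HasDerivAt (fun s => γ s - a) (deriv γ t) t := by
      have : DifferentiableAt ℝ γ t := (hγ.differentiable one_ne_zero).differentiableAt
      exact this.hasDerivAt.sub_const a
    have hsq : HasDerivAt (fun s => ‖γ s - a‖ ^ 2)
        (2 * (inner ℝ (γ t - a) (deriv γ t) : ℝ)) t := hv.norm_sq
    have hne : ((u t) ^ 2 : ℝ) ≠ 0 := pow_ne_zero 2 (ne_of_gt hupos)
    have hlog := (Real.hasDerivAt_log hne).comp t hsq
    have := hlog.div_const (2 * L)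
    have heq : ((u t) ^ 2)⁻¹ * (2 * (inner ℝ (γ t - a) (deriv γ t) : ℝ)) / (2 * L)
        = g' t := by
      rw [hg']
      field_simp
    rw [heq] at this
    exact this.hasDerivWithinAt
  -- g' ≤ φ on (t0, t1)
  have hg'_le : ∀ t ∈ Ioo t0 t1, g' t ≤ φ t := by
    intro t ht
    obtain ⟨h1', h2'⟩ := hmid t ht
    have hupos : 0 < u t := lt_trans hr h1'
    have hCS : (inner ℝ (γ t - a) (deriv γ t) : ℝ) ≤ u t * ‖deriv γ t‖ :=
      real_inner_le_norm _ _
    have : g' t ≤ (u t * ‖deriv γ t‖) / ((u t) ^ 2 * L) := by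
      rw [hg']
      apply div_le_div_of_nonneg_right hCS (by positivity) |>.trans_eq rfl
    refine this.trans (le_of_eq ?_)
    rw [hφ, hρ]
    dsimp only
    rw [if_pos ⟨h1', h2'⟩]
    have hu' : ‖γ t - a‖ = u t := rfl
    rw [hu']
    field_simp
  -- key inequality
  have key : g t1 - g t0 ≤ ∫ t in t0..t1, φ t :=
    intervalIntegral.sub_le_integral_of_hasDeriv_right_of_le ht01.le hg_cont hg_deriv
      (hφ_int.mono_set (Icc_subset_Icc ht0_nonneg ht1_mem'.2)) hg'_le
  have hval : 1 ≤ g t1 - g t0 := by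
    rw [hg]
    dsimp only
    rw [hut0']
    have h1' : Real.log (R ^ 2) ≤ Real.log ((u t1) ^ 2) := by
      apply Real.log_le_log (by positivity)
      exact pow_le_pow_left₀ hRpos.le hut1 2
    have hR2 : Real.log (R ^ 2) = 2 * Real.log R := by
      rw [Real.log_pow]; push_cast; ring
    have hr2 : Real.log (r ^ 2) = 2 * Real.log r := by
      rw [Real.log_pow]; push_cast; ring
    have hLdef : L = Real.log R - Real.log r := Real.log_div (ne_of_gt hRpos) (ne_of_gt hr)
    rw [hr2, ← sub_div, le_div_iff₀ (by positivity : (0:ℝ) < 2 * L)]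
    linarith [h1']
  have hmono : (∫ t in t0..t1, φ t) ≤ ∫ t in (0:ℝ)..1, φ t := by
    apply intervalIntegral.integral_mono_interval ht0_nonneg ht01.le ht1_mem'.2
    · filter_upwards with t using hφ_nonneg t
    · rw [← uIcc_of_le (by norm_num : (0:ℝ) ≤ 1)] at hφ_int
      exact hφ_int.intervalIntegrable
  calc 1 ≤ g t1 - g t0 := hval
    _ ≤ ∫ t in t0..t1, φ t := key
    _ ≤ ∫ t in (0:ℝ)..1, φ t := hmono
end

section
/- Let n ≥ 2 and let f : ℝⁿ → ℝⁿ be a continuous open map. If there exist a sequence (a_i) in ℝⁿ with |a_i| → ∞ and R > 0 such that |f(a_i) - f(0)| ≤ R for all i, and diam f(B(0,|a_i|)) ≥ R/2 for all i, then diam f(S(0,|a_i|)) ≥ R/2 for all i, where S(0,t) is the sphere of radius t. -/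
open Metric Filter

set_option maxHeartbeats 1000000

/-- for a continuous open map, the diameter bound for images of
balls passes to images of the boundary spheres. -/
theorem stmt12 (n : ℕ) (hn : 2 ≤ n)
    (f : EuclideanSpace ℝ (Fin n) → EuclideanSpace ℝ (Fin n))
    (hf : Continuous f) (hopen : IsOpenMap f)
    (a : ℕ → EuclideanSpace ℝ (Fin n)) (R : ℝ) (hR : 0 < R)
    (ha : Tendsto (fun i => ‖a i‖) atTop atTop)
    (hfa : ∀ i, ‖f (a i) - f 0‖ ≤ R)
    (hdiam : ∀ i, R / 2 ≤ diam (f '' ball 0 ‖a i‖)) :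
    ∀ i, R / 2 ≤ diam (f '' sphere 0 ‖a i‖) := by
  intro i
  set r := ‖a i‖ with hr
  set U := f '' ball (0 : EuclideanSpace ℝ (Fin n)) r with hU
  have hUopen : IsOpen U := hopen _ isOpen_ball
  have hK : IsCompact (f '' closedBall (0 : EuclideanSpace ℝ (Fin n)) r) :=
    (isCompact_closedBall 0 r).image hf
  have hsub : closure U ⊆ f '' closedBall 0 r :=
    closure_minimal (Set.image_mono ball_subset_closedBall) hK.isClosed
  have hbd : Bornology.IsBounded (closure U) := hK.isBounded.subset hsub
  have hdi : R / 2 ≤ diam U := hdiam i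
  have hUne : U.Nonempty := by
    by_contra h
    rw [Set.not_nonempty_iff_eq_empty] at h
    rw [h, Metric.diam_empty] at hdi
    linarith
  have hcc : IsCompact (closure U) := hK.of_isClosed_subset isClosed_closure hsub
  -- get points of closure U realizing the diameter
  have hccprod : IsCompact ((closure U) ×ˢ (closure U)) := hcc.prod hcc
  have hprodne : ((closure U) ×ˢ (closure U)).Nonempty :=
    (hUne.closure).prod (hUne.closure)
  have hg : Continuous (fun z : (EuclideanSpace ℝ (Fin n)) × (EuclideanSpace ℝ (Fin n)) =>
      dist z.1 z.2) := continuous_dist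
  obtain ⟨⟨p, q⟩, hpq, hmax⟩ := hccprod.exists_isMaxOn hprodne hg.continuousOn
  have hp : p ∈ closure U := hpq.1
  have hq : q ∈ closure U := hpq.2
  have hdist : dist p q = diam (closure U) := by
    apply le_antisymm (dist_le_diam_of_mem hbd hp hq)
    apply Metric.diam_le_of_forall_dist_le dist_nonneg
    intro x hx y hy
    exact isMaxOn_iff.1 hmax (x, y) (Set.mk_mem_prod hx hy)
  have hdcl : diam (closure U) = diam U := Metric.diam_closure U
  have hdpos : 0 < dist p q := by
    rw [hdist, hdcl]; linarith
  -- points realizing the max distance are not in the open set U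
  have key : ∀ x y : EuclideanSpace ℝ (Fin n), x ∈ closure U → y ∈ closure U →
      dist x y = diam (closure U) → x ∉ U := by
    intro x y hx hy hxy hxU
    obtain ⟨ε, hε, hball⟩ := Metric.isOpen_iff.1 hUopen x hxU
    have hdxy : 0 < dist x y := by rw [hxy, ← hdist]; exact hdpos
    set c : ℝ := ε / 2 / dist x y with hc
    have hcpos : 0 < c := div_pos (by linarith) hdxy
    set x' := x + c • (x - y) with hx'
    have hxx' : dist x' x = ε / 2 := by
      rw [hx', dist_eq_norm]
      simp only [add_sub_cancel_left, norm_smul, Real.norm_eq_abs,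
        abs_of_pos hcpos]
      rw [hc, ← dist_eq_norm]
      field_simp
    have hx'U : x' ∈ U := hball (by
      rw [mem_ball, hxx']; linarith)
    have hx'y : dist x' y = (1 + c) * dist x y := by
      rw [dist_eq_norm, hx']
      have : x + c • (x - y) - y = (1 + c) • (x - y) := by
        rw [add_smul, one_smul]; abel
      rw [this, norm_smul, Real.norm_eq_abs, abs_of_pos (by linarith), ← dist_eq_norm]
    have hle : dist x' y ≤ diam (closure U) :=
      dist_le_diam_of_mem hbd (subset_closure hx'U) hy
    rw [hx'y, hxy] at hle
    nlinarith
  have hpU : p ∉ U := key p q hp hq hdist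
  have hqU : q ∉ U := key q p hq hp (by rwa [dist_comm])
  -- p and q are in the image of the sphere
  have himg : ∀ x : EuclideanSpace ℝ (Fin n), x ∈ closure U → x ∉ U →
      x ∈ f '' sphere 0 r := by
    intro x hx hxU
    obtain ⟨z, hz, hfz⟩ := hsub hx
    refine ⟨z, ?_, hfz⟩
    rw [mem_closedBall, dist_zero_right] at hz
    have hznb : z ∉ ball (0 : EuclideanSpace ℝ (Fin n)) r := by
      intro hzb
      exact hxU ⟨z, hzb, hfz⟩
    rw [mem_ball, dist_zero_right, not_lt] at hznb
    rw [mem_sphere_zero_iff_norm]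
    linarith
  have hbd2 : Bornology.IsBounded (f '' sphere 0 r) :=
    hK.isBounded.subset (Set.image_mono sphere_subset_closedBall)
  have := dist_le_diam_of_mem hbd2 (himg p hp hpU) (himg q hq hqU)
  rw [hdist, hdcl] at this
  linarith
end
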